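/- There exists an absolute constant a > 0 with the following property: for all positive integers n and c, if P is a set of n distinct points in ℝ² such that no point of the plane lies in more than c of the closed unit disks centered at the points of P, then P admits an enumeration (stacking order) p_1, …, p_n with vis(p_1, …, p_n) ≥ a · v(c) · n / c. -/

import Mathlib

open MeasureTheory Filter Set Metric
open scoped ENNReal NNReal Topology

noncomputable section

/-- The Euclidean plane. -/
abbrev Pt : Type := EuclideanSpace ℝ (Fin 2)

/-- The visible perimeter of the arrangement of unit disks centered at `p 0, …, p (n-1)`,
where `p i` is stacked below `p j` whenever `i < j`: the sum over `i` of the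
1-dimensional Hausdorff measure of the part of the boundary circle of the disk at `p i`
not covered by the (open) disks stacked below it. -/
def vis {n : ℕ} (p : Fin n → Pt) : ℝ≥0∞ :=
  ∑ i : Fin n, μH[1] {x : Pt | dist x (p i) = 1 ∧ ∀ j : Fin n, j < i → 1 ≤ dist x (p j)}

/- The external angles associated to the sequence of points `p 0, …, p (n-1)`:
`τ_1 = 2π`; for `i > 1`, `τ_i = 0` if `p i` lies in the convex hull of the previous
points, and otherwise `τ_i` is the arc-length measure of the set of unit vectors `u`
with `⟨u, p i⟩ > ⟨u, p j⟩` for all `j < i`. -/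
open Classical in
def extAngle {n : ℕ} (p : Fin n → Pt) (i : Fin n) : ℝ≥0∞ :=
  if (i : ℕ) = 0 then ENNReal.ofReal (2 * Real.pi)
  else if p i ∈ convexHull ℝ (p '' {j : Fin n | j < i}) then 0
  else μH[1] {u : Pt | ‖u‖ = 1 ∧ ∀ j : Fin n, j < i →
    (inner ℝ u (p j) : ℝ) < (inner ℝ u (p i) : ℝ)}

/-- `vinf n` is `v(n)`: the infimum over all sets of `n` distinct points (encoded as
injective functions `Fin n → Pt`) of the maximum visible perimeter over all
stacking orders (enumerations). -/
def vinf (n : ℕ) : ℝ≥0∞ :=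
  ⨅ (p : Fin n → Pt) (_ : Function.Injective p),
    ⨆ σ : Equiv.Perm (Fin n), vis (p ∘ σ)

/-- A set of `n` points is `C`-dense if its maximum pairwise distance is at most
`C · n^{1/2}` times its minimum (nonzero) pairwise distance. -/
def CDense {n : ℕ} (C : ℝ) (p : Fin n → Pt) : Prop :=
  ∀ i j k l : Fin n, k ≠ l →
    dist (p i) (p j) ≤ C * Real.sqrt n * dist (p k) (p l)

/- The perimeter of the convex hull of `Q`: the 1-dimensional Hausdorff measure of its
boundary if the hull has nonempty interior, and otherwise (hull is a point or a segment)
twice its diameter (= twice its length; `0` for a point or the empty set). -/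
open Classical in
def per (Q : Set Pt) : ℝ≥0∞ :=
  if (interior (convexHull ℝ Q)).Nonempty then μH[1] (frontier (convexHull ℝ Q))
  else 2 * EMetric.diam (convexHull ℝ Q)

/-- The `k × k` integer grid `{1, …, k} × {1, …, k}` in the plane. -/
def grid (k : ℕ) : Set Pt :=
  {x | ∃ a b : ℕ, 1 ≤ a ∧ a ≤ k ∧ 1 ≤ b ∧ b ≤ k ∧ x 0 = (a : ℝ) ∧ x 1 = (b : ℝ)}

/-!
Cut the plane into unit squares `cell x = (⌊x 0⌋, ⌊x 1⌋)` and colour each square by its coordinates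
mod 3. Distinct squares of one colour are more than 2 apart, so unit circles centred in them do not
interact and the best visible perimeters of their point sets add up; some colour class `A` holds at
least `n / 9` of the points. A unit square lies in a unit disk, so it holds `m ≤ c` points, and
padding them with translated copies to `c` points gives
`v(c) ≤ (c / m + 1) · best ≤ (2c / m) · best` for the best stacking of the square. Summing over the
squares of `A` gives `v(c) · n ≤ 18 c · max_σ vis(p ∘ σ)`.
-/

lemma exists_norm_sub_lt_norm {E κ : Type*} [NormedAddCommGroup E] [NormedSpace ℝ E]
    [Nontrivial E] [Finite κ] (f : κ → E) : ∃ v : E, ∀ k k', ‖f k - f k'‖ < ‖v‖ := by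
  obtain ⟨v, hv⟩ := exists_norm_eq E (add_nonneg Metric.diam_nonneg zero_le_one :
    0 ≤ Metric.diam (Set.range f) + 1)
  refine ⟨v, fun k k' => ?_⟩
  rw [hv, ← dist_eq_norm]
  exact (Metric.dist_le_diam_of_mem (Set.finite_range f).isBounded ⟨k, rfl⟩ ⟨k', rfl⟩).trans_lt
    (lt_add_one _)

lemma injective_add_natCast_smul {E κ : Type*} [NormedAddCommGroup E] [NormedSpace ℝ E]
    {f : κ → E} (hf : Function.Injective f) {v : E} (hv : ∀ k k', ‖f k - f k'‖ < ‖v‖) :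
    Function.Injective fun x : ℕ × κ => f x.2 + (x.1 : ℝ) • v := by
  rintro ⟨b, k⟩ ⟨b', k'⟩ h
  simp only at h
  obtain rfl : b = b' := by
    by_contra hb
    have hsub : ‖f k - f k'‖ = |(b' : ℝ) - b| * ‖v‖ := by
      rw [← Real.norm_eq_abs, ← norm_smul, sub_smul]
      congr 1
      linear_combination (norm := module) h
    have hone : (1 : ℝ) ≤ |(b' : ℝ) - b| := by
      have := Int.one_le_abs (z := (b' : ℤ) - b) (by omega)
      exact_mod_cast this
    nlinarith [hv k k', norm_nonneg v]
  rw [hf (add_right_cancel h)]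

open Finset in
lemma exists_card_le_mul_card_fiber {α β : Type*} [Fintype α] [Fintype β] [Nonempty β]
    [DecidableEq β] (f : α → β) :
    ∃ b, Fintype.card α ≤ Fintype.card β * #({a | f a = b} : Finset α) := by
  have hsum : ∑ _b : β, Fintype.card α = ∑ b, Fintype.card β * #({a | f a = b} : Finset α) := by
    rw [← mul_sum, ← card_eq_sum_card_fiberwise fun a _ => mem_univ (f a)]
    simp [mul_comm]
  obtain ⟨b, -, hb⟩ := exists_le_of_sum_le univ_nonempty hsum.le
  exact ⟨b, hb⟩

section VisibleArc

variable {ι κ α β γ : Type*} [LinearOrder α] [LinearOrder β]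

/-- The disks at `p j`, `j ∈ s`, are stacked by increasing rank `r j`;
`vis p` is `visOn id p univ`. -/
def visibleArc (r : ι → α) (p : ι → Pt) (s : Finset ι) (i : ι) : Set Pt :=
  {x | dist x (p i) = 1 ∧ ∀ j ∈ s, r j < r i → 1 ≤ dist x (p j)}

def visOn (r : ι → α) (p : ι → Pt) (s : Finset ι) : ℝ≥0∞ :=
  ∑ i ∈ s, μH[1] (visibleArc r p s i)

variable {r : ι → α} {p : ι → Pt} {s t : Finset ι}

lemma visibleArc_anti (h : t ⊆ s) (i : ι) : visibleArc r p s i ⊆ visibleArc r p t i :=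
  fun _ hx => ⟨hx.1, fun j hj => hx.2 j (h hj)⟩

lemma visibleArc_eq_of_far {i : ι} (h : t ⊆ s)
    (hfar : ∀ j ∈ s, j ∉ t → 2 ≤ dist (p i) (p j)) :
    visibleArc r p t i = visibleArc r p s i := by
  refine Set.Subset.antisymm ?_ (visibleArc_anti h i)
  rintro x ⟨hx, hxt⟩
  refine ⟨hx, fun j hj hji => ?_⟩
  by_cases hjt : j ∈ t
  · exact hxt j hjt hji
  · have := dist_triangle_left (p i) (p j) x
    linarith [hfar j hj hjt]

lemma visOn_congr_rank {r' : ι → β} (h : ∀ i ∈ s, ∀ j ∈ s, r j < r i ↔ r' j < r' i) :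
    visOn r p s = visOn r' p s :=
  Finset.sum_congr rfl fun i hi => by
    congr 1; ext x
    simp only [visibleArc, Set.mem_ofPred_eq]
    exact and_congr_right fun _ => forall₂_congr fun j hj => by rw [h i hi j hj]

lemma visOn_congr_points {p' : ι → Pt} (h : ∀ i ∈ s, p i = p' i) :
    visOn r p s = visOn r p' s :=
  Finset.sum_congr rfl fun i hi => by
    congr 1; ext x
    simp only [visibleArc, Set.mem_ofPred_eq, h i hi]
    exact and_congr_right fun _ => forall₂_congr fun j hj => by rw [h j hj]

lemma visOn_add_const (v : Pt) : visOn r (fun i => p i + v) s = visOn r p s :=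
  Finset.sum_congr rfl fun i _ => by
    have : visibleArc r (fun i => p i + v) s i =
        IsometryEquiv.subRight v ⁻¹' visibleArc r p s i := by
      ext x
      simp [visibleArc]
    rw [this, IsometryEquiv.hausdorffMeasure_preimage]

lemma visOn_image [DecidableEq ι] {e : κ → ι} {s : Finset κ} (he : Set.InjOn e s) :
    visOn r p (s.image e) = visOn (r ∘ e) (p ∘ e) s := by
  rw [visOn, Finset.sum_image he]
  refine Finset.sum_congr rfl fun i _ => ?_
  simp [visibleArc]

lemma visOn_le_of_lower (h : t ⊆ s) (hlow : ∀ i ∈ t, ∀ j ∈ s, r j < r i → j ∈ t) :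
    visOn r p t ≤ visOn r p s := by
  refine le_trans (Finset.sum_le_sum fun i hi => le_of_eq ?_) (Finset.sum_le_sum_of_subset h)
  congr 1
  refine Set.Subset.antisymm (fun x hx => ⟨hx.1, fun j hj hji => hx.2 j (hlow i hi j hj hji) hji⟩)
    (visibleArc_anti h i)

lemma visOn_le_sum_fiberwise [DecidableEq γ] {g : ι → γ} {u : Finset γ}
    (hg : ∀ i ∈ s, g i ∈ u) : visOn r p s ≤ ∑ b ∈ u, visOn r p (s.filter (g · = b)) := by
  rw [visOn, ← Finset.sum_fiberwise_of_maps_to hg]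
  exact Finset.sum_le_sum fun b _ => Finset.sum_le_sum fun i _ =>
    measure_mono (visibleArc_anti (Finset.filter_subset _ s) i)

lemma visOn_eq_sum_fiberwise_of_far [DecidableEq γ] {g : ι → γ} {u : Finset γ}
    (hg : ∀ i ∈ s, g i ∈ u) (hfar : ∀ i ∈ s, ∀ j ∈ s, g i ≠ g j → 2 ≤ dist (p i) (p j)) :
    visOn r p s = ∑ b ∈ u, visOn r p (s.filter (g · = b)) := by
  rw [visOn, ← Finset.sum_fiberwise_of_maps_to hg]
  refine Finset.sum_congr rfl fun b _ => Finset.sum_congr rfl fun i hi => ?_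
  obtain ⟨his, rfl⟩ := Finset.mem_filter.1 hi
  rw [visibleArc_eq_of_far (Finset.filter_subset _ s) fun j hj hjt =>
    hfar i his j hj fun hij => hjt (Finset.mem_filter.2 ⟨hj, hij.symm⟩)]

end VisibleArc

section MaxVis

variable {n : ℕ} {α κ γ : Type*} [LinearOrder α] {p : Fin n → Pt} {s t : Finset (Fin n)}

lemma vis_comp_perm (p : Fin n → Pt) (σ : Equiv.Perm (Fin n)) :
    vis (p ∘ σ) = visOn σ.symm p Finset.univ := by
  refine Fintype.sum_equiv σ _ _ fun k => ?_
  congr 1; ext x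
  simp only [visibleArc, Set.mem_ofPred_eq, Function.comp_apply, Finset.mem_univ, true_implies,
    Equiv.symm_apply_apply]
  refine and_congr_right fun _ => Iff.trans ?_ σ.forall_congr_right
  simp only [Equiv.symm_apply_apply]

def maxVisOn (p : Fin n → Pt) (s : Finset (Fin n)) : ℝ≥0∞ :=
  ⨆ ρ : Equiv.Perm (Fin n), visOn ρ p s

lemma iSup_vis_comp_perm (p : Fin n → Pt) :
    ⨆ σ : Equiv.Perm (Fin n), vis (p ∘ σ) = maxVisOn p Finset.univ := by
  simp only [vis_comp_perm, maxVisOn]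
  exact Equiv.symm_bijective.2.iSup_comp (fun ρ : Equiv.Perm (Fin n) => visOn ρ p Finset.univ)

lemma exists_vis_comp_perm_eq_maxVisOn (p : Fin n → Pt) :
    ∃ σ : Equiv.Perm (Fin n), vis (p ∘ σ) = maxVisOn p Finset.univ :=
  iSup_vis_comp_perm p ▸ exists_eq_ciSup_of_finite

lemma vinf_le_maxVisOn {p : Fin n → Pt} (hp : Function.Injective p) :
    vinf n ≤ maxVisOn p Finset.univ :=
  (iInf₂_le p hp).trans_eq (iSup_vis_comp_perm p)

lemma exists_perm_lt_iff_lt {r : Fin n → α} (hr : Set.InjOn r s) :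
    ∃ ρ : Equiv.Perm (Fin n), ∀ i ∈ s, ∀ j ∈ s, ρ j < ρ i ↔ r j < r i := by
  let K : Fin n → α ×ₗ Fin n := fun i => toLex (r i, i)
  have hK : Function.Injective K := fun i j h => congrArg Prod.snd (toLex.injective h)
  have hmono : StrictMono (K ∘ Tuple.sort K) :=
    (Tuple.monotone_sort K).strictMono_of_injective (hK.comp (Tuple.sort K).injective)
  refine ⟨(Tuple.sort K).symm, fun i hi j hj => ?_⟩
  rw [← hmono.lt_iff_lt]
  simp only [Function.comp_apply, Equiv.apply_symm_apply, K, Prod.Lex.toLex_lt_toLex]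
  constructor
  · rintro (h | ⟨h, hji⟩)
    · exact h
    · exact absurd hji (hr hj hi h).not_lt
  · exact Or.inl

lemma visOn_le_maxVisOn {r : Fin n → α} (hr : Set.InjOn r s) : visOn r p s ≤ maxVisOn p s := by
  obtain ⟨ρ, hρ⟩ := exists_perm_lt_iff_lt hr
  exact (visOn_congr_rank hρ).ge.trans (le_iSup (fun ρ : Equiv.Perm (Fin n) => visOn ρ p s) ρ)

lemma maxVisOn_mono (h : s ⊆ t) : maxVisOn p s ≤ maxVisOn p t := by
  refine iSup_le fun ρ => ?_
  let K : Fin n → Bool ×ₗ Fin n := fun i => toLex (decide (i ∉ s), ρ i)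
  have hK : Function.Injective K := fun i j hij =>
    ρ.injective (congrArg Prod.snd (toLex.injective hij))
  calc visOn ρ p s = visOn K p s :=
        visOn_congr_rank fun i hi j hj => by simp [K, hi, hj, Prod.Lex.toLex_lt_toLex]
    _ ≤ visOn K p t := visOn_le_of_lower h fun i hi j _ hji => by
        by_contra hjs
        simp [K, hi, hjs, Prod.Lex.toLex_lt_toLex] at hji
        exact absurd hji (by decide)
    _ ≤ maxVisOn p t := visOn_le_maxVisOn hK.injOn

lemma exists_visOn_eq_maxVisOn (p : Fin n → Pt) (s : Finset (Fin n)) :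
    ∃ ρ : Equiv.Perm (Fin n), visOn ρ p s = maxVisOn p s :=
  exists_eq_ciSup_of_finite

lemma sum_maxVisOn_fiberwise_le_of_far [DecidableEq γ] {g : Fin n → γ} {u : Finset γ}
    (hg : ∀ i ∈ s, g i ∈ u) (hfar : ∀ i ∈ s, ∀ j ∈ s, g i ≠ g j → 2 ≤ dist (p i) (p j)) :
    ∑ b ∈ u, maxVisOn p (s.filter (g · = b)) ≤ maxVisOn p s := by
  choose ρ hρ using fun b => exists_visOn_eq_maxVisOn p (s.filter (g · = b))
  let K : Fin n → Fin n ×ₗ Fin n := fun i => toLex (ρ (g i) i, i)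
  have hK : Function.Injective K := fun i j hij => congrArg Prod.snd (toLex.injective hij)
  calc ∑ b ∈ u, maxVisOn p (s.filter (g · = b))
      = ∑ b ∈ u, visOn K p (s.filter (g · = b)) := Finset.sum_congr rfl fun b _ => by
        rw [← hρ b]
        refine visOn_congr_rank fun i hi j hj => ?_
        obtain ⟨-, rfl⟩ := Finset.mem_filter.1 hi
        obtain ⟨-, hj⟩ := Finset.mem_filter.1 hj
        simp +contextual [K, hj, Prod.Lex.toLex_lt_toLex]
    _ = visOn K p s := (visOn_eq_sum_fiberwise_of_far hg hfar).symm
    _ ≤ maxVisOn p s := visOn_le_maxVisOn hK.injOn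

lemma visOn_comp_le_maxVisOn {e : κ → Fin n} {r : κ → α} {F : Finset κ} (he : Set.InjOn e F)
    (hr : Set.InjOn r F) (hF : F.image e ⊆ s) : visOn r (p ∘ e) F ≤ maxVisOn p s := by
  rcases isEmpty_or_nonempty κ with hκ | hκ
  · simp [visOn, Finset.eq_empty_of_isEmpty F]
  set r' := r ∘ Function.invFunOn e F
  have hr' : ∀ i ∈ F, r' (e i) = r i := fun i hi => by
    simp only [r', Function.comp_apply, he.leftInvOn_invFunOn hi]
  calc visOn r (p ∘ e) F = visOn (r' ∘ e) (p ∘ e) F :=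
        visOn_congr_rank fun i hi j hj => by simp [hr' i hi, hr' j hj]
    _ = visOn r' p (F.image e) := (visOn_image he).symm
    _ ≤ maxVisOn p (F.image e) := visOn_le_maxVisOn ?_
    _ ≤ maxVisOn p s := maxVisOn_mono hF
  rw [Finset.coe_image]
  rintro _ ⟨i, hi, rfl⟩ _ ⟨j, hj, rfl⟩ hij
  rw [hr' i hi, hr' j hj] at hij
  rw [hr hi hj hij]

end MaxVis

section Padding

open Finset

variable {n : ℕ} {p : Fin n → Pt} {s : Finset (Fin n)}

/-- The `c` points are taken from `c / #s + 1` disjoint translates of `p '' s`; splitting any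
stacking of them by translate can only increase the visible perimeter. -/
lemma vinf_le_mul_maxVisOn (hp : Set.InjOn p s) (hs : s.Nonempty) (c : ℕ) :
    vinf c ≤ (c / #s + 1 : ℕ) * maxVisOn p s := by
  set m := #s
  have : NeZero m := ⟨hs.card_pos.ne'⟩
  set e := s.orderEmbOfFin rfl
  have hpe : Function.Injective (p ∘ e) := fun k k' h =>
    e.injective (hp (s.orderEmbOfFin_mem rfl k) (s.orderEmbOfFin_mem rfl k') h)
  obtain ⟨v, hv⟩ := exists_norm_sub_lt_norm (p ∘ e)
  set d : Fin c → ℕ × Fin m := fun i => Nat.divModEquiv m i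
  have hd : Function.Injective d := (Nat.divModEquiv m).injective.comp Fin.val_injective
  set q : Fin c → Pt := fun i => p (e (d i).2) + ((d i).1 : ℝ) • v
  have hq : Function.Injective q := (injective_add_natCast_smul hpe hv).comp hd
  refine (vinf_le_maxVisOn hq).trans (iSup_le fun σ => ?_)
  have hdc : ∀ i ∈ (univ : Finset (Fin c)), (d i).1 ∈ range (c / m + 1) := fun i _ =>
    mem_range_succ_iff.2 (Nat.div_le_div_right i.2.le)
  calc visOn σ q univ ≤ ∑ b ∈ range (c / m + 1), visOn σ q {i | (d i).1 = b} :=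
        visOn_le_sum_fiberwise hdc
    _ ≤ ∑ b ∈ range (c / m + 1), maxVisOn p s := sum_le_sum fun b _ => ?_
    _ = (c / m + 1 : ℕ) * maxVisOn p s := by simp
  calc visOn σ q {i | (d i).1 = b}
      = visOn σ (fun i => p (e (d i).2) + (b : ℝ) • v) {i | (d i).1 = b} :=
        visOn_congr_points fun i hi => by simp only [q, (mem_filter.1 hi).2]
    _ = visOn σ (p ∘ e ∘ Prod.snd ∘ d) {i | (d i).1 = b} := visOn_add_const _
    _ ≤ maxVisOn p s := visOn_comp_le_maxVisOn ?_ σ.injective.injOn ?_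
  · intro i hi j hj hij
    exact hd (Prod.ext ((mem_filter.1 hi).2.trans (mem_filter.1 hj).2.symm) (e.injective hij))
  · exact image_subset_iff.2 fun i _ => s.orderEmbOfFin_mem rfl _

lemma vinf_mul_card_le (hp : Set.InjOn p s) (hs : s.Nonempty) {c : ℕ} (hsc : #s ≤ c) :
    vinf c * #s ≤ 2 * c * maxVisOn p s := by
  have hcount : (c / #s + 1) * #s ≤ 2 * c := by
    rw [add_one_mul]
    linarith [Nat.div_mul_le_self c #s]
  calc vinf c * #s ≤ (c / #s + 1 : ℕ) * maxVisOn p s * #s :=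
        mul_le_mul_left (vinf_le_mul_maxVisOn hp hs c) _
    _ = ((c / #s + 1) * #s : ℕ) * maxVisOn p s := by push_cast; ring
    _ ≤ (2 * c : ℕ) * maxVisOn p s := mul_le_mul_left (by exact_mod_cast hcount) _
    _ = 2 * c * maxVisOn p s := by push_cast; ring

end Padding

section Cells

open Finset

def cell (x : Pt) : ℤ × ℤ := (⌊x 0⌋, ⌊x 1⌋)

def cellColor (x : Pt) : ZMod 3 × ZMod 3 := ((⌊x 0⌋ : ZMod 3), (⌊x 1⌋ : ZMod 3))

lemma exists_forall_cell_eq_dist_le_one (z : ℤ × ℤ) :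
    ∃ y : Pt, ∀ x : Pt, cell x = z → dist x y ≤ 1 := by
  refine ⟨!₂[z.1 + 1 / 2, z.2 + 1 / 2], fun x hx => ?_⟩
  obtain ⟨h0, h1⟩ := Prod.ext_iff.1 hx
  simp only [cell] at h0 h1
  have hc : ∀ k : ℤ, ∀ a : ℝ, ⌊a⌋ = k → dist a (k + 1 / 2) ^ 2 ≤ 1 / 4 := by
    intro k a hk
    have := Int.floor_le a
    have := Int.lt_floor_add_one a
    rw [hk] at *
    rw [Real.dist_eq, sq_abs]
    nlinarith
  rw [EuclideanSpace.dist_eq, Fin.sum_univ_two, Real.sqrt_le_one]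
  have := hc _ _ h0
  have := hc _ _ h1
  simp only [Matrix.cons_val_zero, Matrix.cons_val_one]
  linarith

lemma two_lt_abs_sub_of_floor_ne {a b : ℝ} (hne : ⌊a⌋ ≠ ⌊b⌋) (hmod : (⌊a⌋ : ZMod 3) = ⌊b⌋) :
    2 < |a - b| := by
  have h3 := (ZMod.intCast_eq_intCast_iff_dvd_sub _ _ 3).1 hmod
  have ha := Int.floor_le a
  have ha' := Int.lt_floor_add_one a
  have hb := Int.floor_le b
  have hb' := Int.lt_floor_add_one b
  rcases (by omega : ⌊a⌋ + 3 ≤ ⌊b⌋ ∨ ⌊b⌋ + 3 ≤ ⌊a⌋) with h | h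
  · have : (⌊a⌋ : ℝ) + 3 ≤ ⌊b⌋ := by exact_mod_cast h
    rw [abs_sub_comm]
    exact lt_abs.2 (Or.inl (by linarith))
  · have : (⌊b⌋ : ℝ) + 3 ≤ ⌊a⌋ := by exact_mod_cast h
    exact lt_abs.2 (Or.inl (by linarith))

lemma two_le_dist_of_cell_ne {x y : Pt} (hne : cell x ≠ cell y)
    (hcol : cellColor x = cellColor y) : 2 ≤ dist x y := by
  have hcoord : ∀ k, ⌊x k⌋ ≠ ⌊y k⌋ → (⌊x k⌋ : ZMod 3) = ⌊y k⌋ → 2 ≤ dist x y := fun k h h3 =>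
    (two_lt_abs_sub_of_floor_ne h h3).le.trans
      (by rw [← Real.dist_eq]; exact PiLp.dist_apply_le x y k)
  simp only [cell, cellColor, ne_eq, Prod.mk.injEq, not_and_or] at hne hcol
  rcases hne with h | h
  · exact hcoord 0 h hcol.1
  · exact hcoord 1 h hcol.2

lemma card_filter_cell_eq_le {n c : ℕ} {p : Fin n → Pt}
    (hdepth : ∀ x : Pt, {i : Fin n | dist x (p i) ≤ 1}.ncard ≤ c) (s : Finset (Fin n)) (z : ℤ × ℤ) :
    #(s.filter fun i => cell (p i) = z) ≤ c := by
  obtain ⟨y, hy⟩ := exists_forall_cell_eq_dist_le_one z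
  rw [← Set.ncard_coe_finset]
  refine (Set.ncard_le_ncard (fun i hi => ?_) (Set.toFinite _)).trans (hdepth y)
  rw [Set.mem_ofPred_eq, dist_comm]
  exact hy _ (Finset.mem_filter.1 hi).2

end Cells

open Finset in
lemma vinf_mul_le_maxVisOn_of_bounded_overlap {n c : ℕ} {p : Fin n → Pt}
    (hp : Function.Injective p) (hdepth : ∀ x : Pt, {i : Fin n | dist x (p i) ≤ 1}.ncard ≤ c) :
    vinf c * n ≤ 18 * c * maxVisOn p univ := by
  obtain ⟨w, hw⟩ := exists_card_le_mul_card_fiber (cellColor ∘ p)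
  set A : Finset (Fin n) := {i | cellColor (p i) = w}
  set Z := A.image (cell ∘ p)
  have hZ : ∀ i ∈ A, cell (p i) ∈ Z := fun i hi => mem_image_of_mem _ hi
  have hfar : ∀ i ∈ A, ∀ j ∈ A, cell (p i) ≠ cell (p j) → 2 ≤ dist (p i) (p j) :=
    fun i hi j hj hne =>
      two_le_dist_of_cell_ne hne ((mem_filter.1 hi).2.trans (mem_filter.1 hj).2.symm)
  have hcell : ∀ z ∈ Z, vinf c * #(A.filter fun i => cell (p i) = z)
      ≤ 2 * c * maxVisOn p (A.filter fun i => cell (p i) = z) := by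
    intro z hz
    obtain ⟨i, hi, hiz⟩ := mem_image.1 hz
    exact vinf_mul_card_le hp.injOn ⟨i, mem_filter.2 ⟨hi, hiz⟩⟩ (card_filter_cell_eq_le hdepth A z)
  have hn : n ≤ 9 * #A := by
    simpa [Fintype.card_prod, ZMod.card] using hw
  calc vinf c * n ≤ 9 * (vinf c * #A) := by
        rw [mul_left_comm]; exact mul_le_mul_right (by exact_mod_cast hn) _
    _ = 9 * ∑ z ∈ Z, vinf c * #(A.filter fun i => cell (p i) = z) := by
        rw [card_eq_sum_card_fiberwise hZ, Nat.cast_sum, mul_sum]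
    _ ≤ 9 * ∑ z ∈ Z, 2 * c * maxVisOn p (A.filter fun i => cell (p i) = z) :=
        mul_le_mul_right (sum_le_sum hcell) _
    _ = 18 * c * ∑ z ∈ Z, maxVisOn p (A.filter fun i => cell (p i) = z) := by
        rw [← mul_sum, ← mul_assoc, ← mul_assoc]; norm_num
    _ ≤ 18 * c * maxVisOn p A := mul_le_mul_right (sum_maxVisOn_fiberwise_le_of_far hZ hfar) _
    _ ≤ 18 * c * maxVisOn p univ := mul_le_mul_right (maxVisOn_mono (subset_univ A)) _

/-- if no point of the plane lies in more than `c` of the `n` unit disks,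
then some stacking order achieves visible perimeter at least `a · v(c) · n / c`. -/
theorem exists_stacking_order_vis_ge_of_bounded_overlap :
    ∃ a : ℝ, 0 < a ∧ ∀ (n c : ℕ), 0 < n → 0 < c →
      ∀ p : Fin n → Pt, Function.Injective p →
        (∀ x : Pt, ({i : Fin n | dist x (p i) ≤ 1}).ncard ≤ c) →
        ∃ σ : Equiv.Perm (Fin n),
          ENNReal.ofReal a * vinf c * (n : ℝ≥0∞) / (c : ℝ≥0∞) ≤ vis (p ∘ σ) := by
  refine ⟨1 / 18, by norm_num, fun n c _ _ p hp hdepth => ?_⟩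
  obtain ⟨σ, hσ⟩ := exists_vis_comp_perm_eq_maxVisOn p
  refine ⟨σ, ENNReal.div_le_of_le_mul ?_⟩
  have h18 : ENNReal.ofReal (1 / 18) = 18⁻¹ := by
    rw [one_div, ENNReal.ofReal_inv_of_pos (by norm_num)]; norm_num
  calc ENNReal.ofReal (1 / 18) * vinf c * n = 18⁻¹ * (vinf c * n) := by rw [h18, mul_assoc]
    _ ≤ 18⁻¹ * (18 * c * maxVisOn p Finset.univ) :=
        mul_le_mul_right (vinf_mul_le_maxVisOn_of_bounded_overlap hp hdepth) _
    _ = vis (p ∘ σ) * c := by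
        rw [hσ, ← mul_assoc, ← mul_assoc, ENNReal.inv_mul_cancel (by norm_num) (by norm_num),
          one_mul, mul_comm]
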